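/- arXiv:1912.04996 — 2 statements merged into one kernel-verified Lean document; each statement's English description precedes it below -/
import Mathlib

section
/- Symmetry of the hyperbolic-type cubic system: if (b₁, b₂, b₃) with b₁ ≠ 0, b₂ ≠ 0, b₃ ≠ 0 is a solution of the system b₁(b₂² − b₃²) = j₁, b₂(b₁² − b₃²) = j₂, b₃(b₁² + b₂²) = j₃, then (−K/b₁, −K/b₂, K/b₃) is also a solution of the same system, where K = ((b₁ b₂ b₃)²)^{1/3} > 0 is the real cube root of (b₁ b₂ b₃)². -/
/-!
Since `K³ = (b₁ b₂ b₃)²`, the substitution `bᵢ ↦ K / bᵢ` turns each monomial `bᵢ bⱼ²` with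
`{i, j, k} = {1, 2, 3}` into `K³ / (bᵢ bⱼ²) = bᵢ bₖ²`: it swaps the two monomials of each
equation. The signs `(−, −, +)` compensate the resulting sign change in the first two equations.
-/

/-- The real cube root. -/
noncomputable def cbrt (x : ℝ) : ℝ :=
  if 0 ≤ x then x ^ ((1 : ℝ) / 3) else -((-x) ^ ((1 : ℝ) / 3))

theorem cbrt_pos {x : ℝ} (hx : 0 < x) : 0 < cbrt x := by
  rw [cbrt, if_pos hx.le]
  exact Real.rpow_pos_of_pos hx _

theorem cbrt_pow_three {x : ℝ} (hx : 0 ≤ x) : cbrt x ^ 3 = x := by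
  rw [cbrt, if_pos hx, ← Real.rpow_natCast, ← Real.rpow_mul hx]
  norm_num

theorem div_mul_div_sq_add_div_sq {F : Type*} [Field F] {x y z K : F}
    (hx : x ≠ 0) (hy : y ≠ 0) (hz : z ≠ 0) (hK : K ^ 3 = (x * y * z) ^ 2) (c : F) :
    K / x * ((K / y) ^ 2 + c * (K / z) ^ 2) = x * (z ^ 2 + c * y ^ 2) := by
  field_simp
  linear_combination (z ^ 2 + c * y ^ 2) * hK

/-- Symmetry of the hyperbolic-type cubic system: if `(b₁, b₂, b₃)` with all entries
nonzero solves `b₁(b₂² − b₃²) = j₁`, `b₂(b₁² − b₃²) = j₂`, `b₃(b₁² + b₂²) = j₃`, then so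
does `(−K/b₁, −K/b₂, K/b₃)`, where `K = ((b₁ b₂ b₃)²)^{1/3} > 0`. -/
theorem hyperbolic_cubic_symmetry (j₁ j₂ j₃ b₁ b₂ b₃ : ℝ)
    (hb₁ : b₁ ≠ 0) (hb₂ : b₂ ≠ 0) (hb₃ : b₃ ≠ 0)
    (h₁ : b₁ * (b₂ ^ 2 - b₃ ^ 2) = j₁)
    (h₂ : b₂ * (b₁ ^ 2 - b₃ ^ 2) = j₂)
    (h₃ : b₃ * (b₁ ^ 2 + b₂ ^ 2) = j₃)
    (K : ℝ) (hK : K = cbrt ((b₁ * b₂ * b₃) ^ 2)) :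
    0 < K ∧
    (-K / b₁) * ((-K / b₂) ^ 2 - (K / b₃) ^ 2) = j₁ ∧
    (-K / b₂) * ((-K / b₁) ^ 2 - (K / b₃) ^ 2) = j₂ ∧
    (K / b₃) * ((-K / b₁) ^ 2 + (-K / b₂) ^ 2) = j₃ := by
  have hprod : 0 < (b₁ * b₂ * b₃) ^ 2 := by positivity
  have hK₃ : K ^ 3 = (b₁ * b₂ * b₃) ^ 2 := hK ▸ cbrt_pow_three hprod.le
  refine ⟨hK ▸ cbrt_pos hprod, ?_, ?_, ?_⟩
  · linear_combination h₁ - div_mul_div_sq_add_div_sq hb₁ hb₂ hb₃ hK₃ (-1)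
  · linear_combination h₂ -
      div_mul_div_sq_add_div_sq hb₂ hb₁ hb₃ (K := K) (by linear_combination hK₃) (-1)
  · linear_combination h₃ +
      div_mul_div_sq_add_div_sq hb₃ hb₁ hb₂ (K := K) (by linear_combination hK₃) 1
end

section
/- If j₁ ≠ 0, j₂ ≠ 0 and j₃ = 0, then the system b₁(b₂² − b₃²) = j₁, b₂(b₁² − b₃²) = j₂, b₃(b₁² + b₂²) = j₃ has exactly one real solution, namely b₁ = (j₂²/j₁)^{1/3}, b₂ = (j₁²/j₂)^{1/3}, b₃ = 0 (real cube roots). -/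
lemma rpow_third_cube {x : ℝ} (hx : 0 ≤ x) : (x ^ ((1:ℝ)/3)) ^ 3 = x := by
  rw [← Real.rpow_natCast (x ^ ((1:ℝ)/3)) 3, ← Real.rpow_mul hx]
  norm_num

lemma cube_cbrt (x : ℝ) : cbrt x ^ 3 = x := by
  unfold cbrt
  split_ifs with h
  · exact rpow_third_cube h
  · have : (0:ℝ) ≤ -x := by linarith
    have := rpow_third_cube this
    nlinarith [this]

lemma cube_inj {a b : ℝ} (h : a ^ 3 = b ^ 3) : a = b := by
  exact (Odd.strictMono_pow (R := ℝ) (by decide)).injective h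

lemma cbrt_cube (x : ℝ) : cbrt (x ^ 3) = x :=
  cube_inj (cube_cbrt (x ^ 3))

/-- If `j₁ ≠ 0`, `j₂ ≠ 0` and `j₃ = 0`, then the system `b₁(b₂² − b₃²) = j₁`,
`b₂(b₁² − b₃²) = j₂`, `b₃(b₁² + b₂²) = j₃` has exactly one real solution, namely
`b₁ = (j₂²/j₁)^{1/3}`, `b₂ = (j₁²/j₂)^{1/3}`, `b₃ = 0`. -/
theorem hyperbolic_cubic_j3_zero (j₁ j₂ j₃ : ℝ)
    (h1 : j₁ ≠ 0) (h2 : j₂ ≠ 0) (h3 : j₃ = 0) :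
    ∀ b₁ b₂ b₃ : ℝ,
      (b₁ * (b₂ ^ 2 - b₃ ^ 2) = j₁ ∧
        b₂ * (b₁ ^ 2 - b₃ ^ 2) = j₂ ∧
        b₃ * (b₁ ^ 2 + b₂ ^ 2) = j₃) ↔
      (b₁ = cbrt (j₂ ^ 2 / j₁) ∧ b₂ = cbrt (j₁ ^ 2 / j₂) ∧ b₃ = 0) := by
  intro b₁ b₂ b₃
  constructor
  · rintro ⟨e1, e2, e3⟩
    subst h3
    have hb1 : b₁ ≠ 0 := by rintro rfl; simp at e1; exact h1 e1.symm
    have hb2 : b₂ ≠ 0 := by rintro rfl; simp at e2; exact h2 e2.symm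
    have hb3 : b₃ = 0 := by
      rcases mul_eq_zero.mp e3 with h | h
      · exact h
      · exfalso
        have hp : 0 < b₁ ^ 2 := by positivity
        nlinarith [sq_nonneg b₂]
    subst hb3
    have e1' : b₁ * b₂ ^ 2 = j₁ := by linarith [e1]
    have e2' : b₂ * b₁ ^ 2 = j₂ := by linarith [e2]
    have k1 : b₁ ^ 3 = j₂ ^ 2 / j₁ := by
      field_simp
      rw [← e1', ← e2']; ring
    have k2 : b₂ ^ 3 = j₁ ^ 2 / j₂ := by
      field_simp
      rw [← e1', ← e2']; ring
    refine ⟨?_, ?_, rfl⟩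
    · rw [← k1, cbrt_cube]
    · rw [← k2, cbrt_cube]
  · rintro ⟨rfl, rfl, rfl⟩
    have c1 := cube_cbrt (j₂ ^ 2 / j₁)
    have c2 := cube_cbrt (j₁ ^ 2 / j₂)
    set a := cbrt (j₂ ^ 2 / j₁)
    set b := cbrt (j₁ ^ 2 / j₂)
    have ea : a * b ^ 2 = j₁ := by
      apply cube_inj
      have : (a * b ^ 2) ^ 3 = a ^ 3 * (b ^ 3) ^ 2 := by ring
      rw [this, c1, c2]
      field_simp
    have eb : b * a ^ 2 = j₂ := by
      apply cube_inj
      have : (b * a ^ 2) ^ 3 = b ^ 3 * (a ^ 3) ^ 2 := by ring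
      rw [this, c1, c2]
      field_simp
    subst h3
    refine ⟨by linarith, by linarith, by ring⟩
end
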